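/- Let a ∈ (0,2) with a ≠ 1, let C, λ₊, λ₋, μ₊, μ₋ > 0, T > 0 and α ∈ (−1,1), and set p = (1−α)/2, q = (1+α)/2. Define r : ℝ → ℝ by r(x) = exp(−(λ₊−μ₊)x) for x > 0 and r(x) = exp(−(λ₋−μ₋)|x|) for x < 0, and let ℓ̃(x) = C·e^{−μ₊x}·x^{−a−1} for x > 0, ℓ̃(x) = C·e^{−μ₋|x|}·|x|^{−a−1} for x < 0, ℓ̃(0) = 0. Then (4T/(1−α²))·∫_ℝ (p·r(x) + q − r(x)^p)·ℓ̃(x) dx = (4T·C·Γ(−a)/(1−α²))·( (p·λ₊^{a} + q·μ₊^{a} − (pλ₊+qμ₊)^{a}) + (p·λ₋^{a} + q·μ₋^{a} − (pλ₋+qμ₋)^{a}) ). -/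

import Mathlib

/-!
On each half-line the integrand is `C` times `g x * x ^ (-a - 1)` with
`g x = p e^{-λx} + q e^{-μx} - e^{-(pλ+qμ)x}`, an exponential sum `∑ cᵢ e^{-θᵢ x}` with
`∑ cᵢ = ∑ cᵢ θᵢ = 0`. These two vanishing moments make `g = O(x²)` at `0`, so two integrations
by parts, with vanishing boundary terms, trade `x ^ (-a - 1)` for `x ^ (1 - a)` against `g''`;
the Gamma integrals `∫ x ^ (1 - a) e^{-θx} = Γ(2 - a) θ ^ (a - 2)` and
`Γ(2 - a) = (1 - a)(-a) Γ(-a)` finish. The estimates `|g⁽ᵏ⁾ x| ≤ K x ^ (2 - k) e^{-m x}`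
(`m = min θᵢ`) behind the integrability and the boundary terms come from the mean value theorem
after factoring out `e^{-m x}`, which shifts the rates to `θᵢ - m ≥ 0`.
-/

open MeasureTheory Real Set

/-- The CTS (classical tempered stable) Lévy density with tail index `a`,
scale `C`, and decay rates `θ₊`, `θ₋`. -/
noncomputable def ctsDensity (a C tp tm : ℝ) (x : ℝ) : ℝ :=
  if 0 < x then C * exp (-(tp * x)) * x ^ (-a - 1)
  else if x < 0 then C * exp (-(tm * |x|)) * |x| ^ (-a - 1)
  else 0

open Filter Topology

theorem exists_pos_forall_le_of_pos {ι : Type*} [Finite ι] {θ : ι → ℝ} (hθ : ∀ i, 0 < θ i) :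
    ∃ m > 0, ∀ i, m ≤ θ i := by
  cases isEmpty_or_nonempty ι
  · exact ⟨1, one_pos, isEmptyElim⟩
  · obtain ⟨i₀, hi₀⟩ := Finite.exists_min θ
    exact ⟨θ i₀, hθ i₀, hi₀⟩

section ExpSum

variable {ι : Type*} [Fintype ι]

noncomputable def expSum (c θ : ι → ℝ) (x : ℝ) : ℝ :=
  ∑ i, c i * exp (-(θ i * x))

theorem hasDerivAt_expSum (c θ : ι → ℝ) (x : ℝ) :
    HasDerivAt (expSum c θ) (-expSum (fun i => θ i * c i) θ x) x := by
  have h : ∀ i, HasDerivAt (fun y => c i * exp (-(θ i * y)))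
      (-(θ i * c i * exp (-(θ i * x)))) x := fun i => by
    have hlin : HasDerivAt (fun y => -(θ i * y)) (-θ i) x := by
      simpa using ((hasDerivAt_id' x).const_mul (θ i)).fun_neg
    exact (hlin.exp.const_mul (c i)).congr_deriv (by ring)
  have hsum := HasDerivAt.fun_sum (u := Finset.univ) fun i _ => h i
  rw [Finset.sum_neg_distrib] at hsum
  exact hsum

theorem expSum_zero (c θ : ι → ℝ) : expSum c θ 0 = ∑ i, c i := by
  simp [expSum]

theorem expSum_eq_exp_mul (c θ : ι → ℝ) (m x : ℝ) :
    expSum c θ x = exp (-(m * x)) * expSum c (fun i => θ i - m) x := by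
  simp only [expSum, Finset.mul_sum]
  refine Finset.sum_congr rfl fun i _ => ?_
  rw [mul_left_comm, ← exp_add]
  ring_nf

theorem sum_mul_mul_pow_eq_zero {c ρ : ι → ℝ} {m : ℝ} {n : ℕ}
    (hc : ∀ j < n + 1, ∑ i, c i * (ρ i - m) ^ j = 0) :
    ∀ j < n, ∑ i, ρ i * c i * (ρ i - m) ^ j = 0 := fun j hj => by
  have h : ∀ i,
      ρ i * c i * (ρ i - m) ^ j = c i * (ρ i - m) ^ (j + 1) + m * (c i * (ρ i - m) ^ j) :=
    fun i => by ring
  simp only [h, Finset.sum_add_distrib, ← Finset.mul_sum, hc j (by omega), hc (j + 1) (by omega)]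
  ring

theorem abs_expSum_le_pow (n : ℕ) {c ρ : ι → ℝ} (hρ : ∀ i, 0 ≤ ρ i)
    (hc : ∀ j < n, ∑ i, c i * ρ i ^ j = 0) {x : ℝ} (hx : 0 ≤ x) :
    |expSum c ρ x| ≤ (∑ i, |c i| * ρ i ^ n) * x ^ n := by
  induction n generalizing c x with
  | zero =>
    simp only [pow_zero, mul_one, expSum]
    refine (Finset.abs_sum_le_sum_abs _ _).trans (Finset.sum_le_sum fun i _ => ?_)
    rw [abs_mul, abs_exp]
    exact mul_le_of_le_one_right (abs_nonneg _)
      (exp_le_one_iff.2 (neg_nonpos.2 (mul_nonneg (hρ i) hx)))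
  | succ n ih =>
    have hc' : ∀ j < n, ∑ i, ρ i * c i * ρ i ^ j = 0 := by
      simpa using sum_mul_mul_pow_eq_zero (m := 0) (by simpa using hc)
    have hK : ∑ i, |ρ i * c i| * ρ i ^ n = ∑ i, |c i| * ρ i ^ (n + 1) :=
      Finset.sum_congr rfl fun i _ => by rw [abs_mul, abs_of_nonneg (hρ i)]; ring
    have hmvt := norm_image_sub_le_of_norm_deriv_le_segment'
      (f := expSum c ρ) (C := (∑ i, |c i| * ρ i ^ (n + 1)) * x ^ n)
      (fun y _ => (hasDerivAt_expSum c ρ y).hasDerivWithinAt)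
      (fun y hy => by
        rw [norm_neg, Real.norm_eq_abs]
        refine (ih hc' hy.1).trans ?_
        rw [hK]
        gcongr
        · exact Finset.sum_nonneg fun i _ => mul_nonneg (abs_nonneg _) (pow_nonneg (hρ i) _)
        · exact hy.1
        · exact hy.2.le) x ⟨hx, le_rfl⟩
    have hc₀ : ∑ i, c i = 0 := by simpa using hc 0 (by omega)
    rw [expSum_zero, hc₀, sub_zero, sub_zero, Real.norm_eq_abs] at hmvt
    rw [pow_succ, ← mul_assoc]
    exact hmvt

theorem abs_expSum_le_pow_mul_exp (n : ℕ) {c θ : ι → ℝ} {m : ℝ} (hθ : ∀ i, m ≤ θ i)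
    (hc : ∀ j < n, ∑ i, c i * (θ i - m) ^ j = 0) {x : ℝ} (hx : 0 ≤ x) :
    |expSum c θ x| ≤ (∑ i, |c i| * (θ i - m) ^ n) * x ^ n * exp (-(m * x)) := by
  rw [expSum_eq_exp_mul c θ m, abs_mul, abs_exp, mul_comm]
  gcongr
  exact abs_expSum_le_pow n (fun i => sub_nonneg.2 (hθ i)) hc hx

theorem abs_expSum_mul_rpow_le (n : ℕ) {c θ : ι → ℝ} {m : ℝ} (hθ : ∀ i, m ≤ θ i)
    (hc : ∀ j < n, ∑ i, c i * (θ i - m) ^ j = 0) (s : ℝ) {x : ℝ} (hx : 0 < x) :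
    |expSum c θ x * x ^ s| ≤ (∑ i, |c i| * (θ i - m) ^ n) * (x ^ (n + s) * exp (-(m * x))) := by
  rw [abs_mul, abs_of_pos (rpow_pos_of_pos hx s), rpow_add hx, rpow_natCast]
  calc |expSum c θ x| * x ^ s
      ≤ (∑ i, |c i| * (θ i - m) ^ n) * x ^ n * exp (-(m * x)) * x ^ s := by
        gcongr; exact abs_expSum_le_pow_mul_exp n hθ hc hx.le
    _ = _ := by ring

theorem integrableOn_expSum_mul_rpow (n : ℕ) {c θ : ι → ℝ} {m s : ℝ} (hm : 0 < m)
    (hθ : ∀ i, m ≤ θ i) (hc : ∀ j < n, ∑ i, c i * (θ i - m) ^ j = 0) (hs : -1 < n + s) :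
    IntegrableOn (fun x => expSum c θ x * x ^ s) (Ioi 0) := by
  have hdom : IntegrableOn (fun x : ℝ => x ^ ((n : ℝ) + s) * exp (-(m * x))) (Ioi 0) := by
    simpa [neg_mul] using integrableOn_rpow_mul_exp_neg_mul_rpow hs one_pos hm
  refine (hdom.const_mul (∑ i, |c i| * (θ i - m) ^ n)).mono' ?_ ?_
  · have hcont : ContinuousOn (fun x : ℝ => expSum c θ x * x ^ s) (Ioi 0) :=
      (continuous_iff_continuousAt.2 fun x =>
        (hasDerivAt_expSum c θ x).continuousAt).continuousOn.mul fun x hx =>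
          (continuousAt_rpow_const x s (Or.inl (ne_of_gt hx))).continuousWithinAt
    exact hcont.aestronglyMeasurable measurableSet_Ioi
  · filter_upwards [ae_restrict_mem measurableSet_Ioi] with x hx
    exact abs_expSum_mul_rpow_le n hθ hc s hx

theorem tendsto_expSum_mul_rpow_nhdsGT_zero (n : ℕ) {c θ : ι → ℝ} {m s : ℝ}
    (hθ : ∀ i, m ≤ θ i) (hc : ∀ j < n, ∑ i, c i * (θ i - m) ^ j = 0) (hs : 0 < n + s) :
    Tendsto (fun x => expSum c θ x * x ^ s) (𝓝[>] 0) (𝓝 0) := by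
  set K := ∑ i, |c i| * (θ i - m) ^ n
  have hbound : Tendsto (fun x : ℝ => K * (x ^ ((n : ℝ) + s) * exp (-(m * x)))) (𝓝[>] 0) (𝓝 0) := by
    have hcont : ContinuousAt (fun x : ℝ => K * (x ^ ((n : ℝ) + s) * exp (-(m * x)))) 0 :=
      continuousAt_const.mul ((continuousAt_rpow_const 0 _ (Or.inr hs.le)).mul (by fun_prop))
    simpa [zero_rpow hs.ne'] using hcont.tendsto.mono_left nhdsWithin_le_nhds
  refine squeeze_zero_norm' ?_ hbound
  filter_upwards [self_mem_nhdsWithin] with x hx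
  exact abs_expSum_mul_rpow_le n hθ hc s hx

theorem tendsto_expSum_mul_rpow_atTop {c θ : ι → ℝ} (hθ : ∀ i, 0 < θ i) (s : ℝ) :
    Tendsto (fun x => expSum c θ x * x ^ s) atTop (𝓝 0) := by
  have h := tendsto_finsetSum Finset.univ fun i _ =>
    (tendsto_rpow_mul_exp_neg_mul_atTop_nhds_zero s (θ i) (hθ i)).const_mul (c i)
  simp only [mul_zero, Finset.sum_const_zero, neg_mul] at h
  refine h.congr fun x => ?_
  simp only [expSum, Finset.sum_mul]
  exact Finset.sum_congr rfl fun i _ => by ring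

theorem integral_expSum_mul_rpow_sub_one_eq_Gamma {c θ : ι → ℝ} (hθ : ∀ i, 0 < θ i) {s : ℝ}
    (hs : 0 < s) :
    ∫ x in Ioi 0, expSum c θ x * x ^ (s - 1) = Gamma s * ∑ i, c i * θ i ^ (-s) := by
  have hint : ∀ i, IntegrableOn (fun x : ℝ => c i * (x ^ (s - 1) * exp (-(θ i * x)))) (Ioi 0) :=
    fun i => by
      have h := (integrableOn_rpow_mul_exp_neg_mul_rpow (s := s - 1) (by linarith) one_pos
        (hθ i)).const_mul (c i)
      simp only [rpow_one, neg_mul] at h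
      exact h
  simp_rw [expSum, Finset.sum_mul, mul_assoc, mul_comm (exp _)]
  rw [integral_finsetSum _ fun i _ => hint i, Finset.mul_sum]
  refine Finset.sum_congr rfl fun i _ => ?_
  rw [integral_const_mul, integral_rpow_mul_exp_neg_mul_Ioi hs (hθ i), one_div,
    inv_rpow (hθ i).le, ← rpow_neg (hθ i).le]
  ring

theorem integral_expSum_mul_rpow_sub_one (n : ℕ) {c θ : ι → ℝ} {m s : ℝ} (hm : 0 < m)
    (hθ : ∀ i, m ≤ θ i) (hc : ∀ j < n + 1, ∑ i, c i * (θ i - m) ^ j = 0) (hs₀ : s ≠ 0)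
    (hs : -1 < n + s) :
    ∫ x in Ioi 0, expSum c θ x * x ^ (s - 1)
      = (∫ x in Ioi 0, expSum (fun i => θ i * c i) θ x * x ^ s) / s := by
  have hc' := sum_mul_mul_pow_eq_zero hc
  have hv : ∀ x ∈ Ioi (0 : ℝ), HasDerivAt (fun y => y ^ s / s) (x ^ (s - 1)) x := fun x hx =>
    ((hasDerivAt_rpow_const (Or.inl (ne_of_gt hx))).div_const s).congr_deriv
      (by field_simp)
  have hθ₀ : ∀ i, 0 < θ i := fun i => hm.trans_le (hθ i)
  have hlim : ∀ l : Filter ℝ, Tendsto (fun x => expSum c θ x * x ^ s) l (𝓝 0) →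
      Tendsto (fun x => expSum c θ x * (x ^ s / s)) l (𝓝 0) := fun l h => by
    simpa [mul_div_assoc] using h.div_const s
  have hibp := integral_Ioi_mul_deriv_eq_deriv_mul (fun x _ => hasDerivAt_expSum c θ x) hv
    (integrableOn_expSum_mul_rpow (n + 1) hm hθ hc (by push_cast; linarith))
    (IntegrableOn.congr_fun ((integrableOn_expSum_mul_rpow n hm hθ hc' hs).neg.div_const s)
      (fun x _ => by simp only [Pi.mul_apply, Pi.neg_apply]; ring) measurableSet_Ioi)
    (hlim _ (tendsto_expSum_mul_rpow_nhdsGT_zero (n + 1) hθ hc (by push_cast; linarith)))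
    (hlim _ (tendsto_expSum_mul_rpow_atTop hθ₀ s))
  rw [hibp, ← integral_div]
  simp only [neg_mul, integral_neg, mul_div_assoc, sub_zero, neg_neg, zero_sub]

theorem integral_expSum_mul_rpow_neg_sub_one {c θ : ι → ℝ} {a : ℝ} (ha₀ : 0 < a) (ha₂ : a < 2)
    (ha₁ : a ≠ 1) (hθ : ∀ i, 0 < θ i) (hc₀ : ∑ i, c i = 0) (hc₁ : ∑ i, c i * θ i = 0) :
    IntegrableOn (fun x => expSum c θ x * x ^ (-a - 1)) (Ioi 0)
      ∧ ∫ x in Ioi 0, expSum c θ x * x ^ (-a - 1) = Gamma (-a) * ∑ i, c i * θ i ^ a := by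
  obtain ⟨m, hm, hmθ⟩ := exists_pos_forall_le_of_pos hθ
  have hc : ∀ j < 1 + 1, ∑ i, c i * (θ i - m) ^ j = 0 := by
    intro j hj
    interval_cases j
    · simpa using hc₀
    · simp only [pow_one, mul_sub, Finset.sum_sub_distrib, ← Finset.sum_mul, hc₀, hc₁]
      ring
  refine ⟨integrableOn_expSum_mul_rpow 2 hm hmθ hc (by push_cast; linarith), ?_⟩
  have h₁ := integral_expSum_mul_rpow_sub_one 1 hm hmθ hc (neg_ne_zero.2 ha₀.ne')
    (by push_cast; linarith)
  have h₂ := integral_expSum_mul_rpow_sub_one 0 hm hmθ (sum_mul_mul_pow_eq_zero hc)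
    (sub_ne_zero.2 ha₁.symm) (by push_cast; linarith)
  have h₃ := integral_expSum_mul_rpow_sub_one_eq_Gamma
    (c := fun i => θ i * (θ i * c i)) hθ (s := 2 - a) (by linarith)
  rw [show (1 : ℝ) - a - 1 = -a by ring] at h₂
  rw [show (2 : ℝ) - a - 1 = 1 - a by ring] at h₃
  have hΓ : Gamma (2 - a) = (1 - a) * (-a) * Gamma (-a) := by
    rw [show 2 - a = (1 - a) + 1 by ring, Gamma_add_one (sub_ne_zero.2 ha₁.symm),
      show 1 - a = -a + 1 by ring, Gamma_add_one (neg_ne_zero.2 ha₀.ne')]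
    ring
  have hpow : ∀ i, θ i * (θ i * c i) * θ i ^ (-(2 - a)) = c i * θ i ^ a := fun i => by
    rw [show -(2 - a) = a - 2 by ring, rpow_sub (hθ i), rpow_two]
    field_simp [(hθ i).ne']
  rw [h₁, h₂, h₃, hΓ]
  simp only [hpow]
  field_simp [ha₀.ne', sub_ne_zero.2 ha₁.symm]

end ExpSum

theorem integral_eq_integral_Ioi_add_integral_Ioi_comp_neg {E : Type*} [NormedAddCommGroup E]
    [NormedSpace ℝ E] {f : ℝ → E} (hf : IntegrableOn f (Ioi 0))
    (hf' : IntegrableOn (fun x => f (-x)) (Ioi 0)) :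
    ∫ x, f x = (∫ x in Ioi 0, f x) + ∫ x in Ioi 0, f (-x) := by
  have hIic : IntegrableOn f (Iic 0) := by
    have h : IntegrableOn (f ∘ Neg.neg) (Neg.neg ⁻¹' Iic 0) := by
      rw [show Neg.neg ⁻¹' Iic (0 : ℝ) = Ici 0 by ext; simp, integrableOn_Ici_iff_integrableOn_Ioi]
      exact hf'
    exact (MeasurePreserving.integrableOn_comp_preimage
      (Measure.measurePreserving_neg volume) (Homeomorph.neg ℝ).measurableEmbedding).mp h
  rw [← intervalIntegral.integral_Iic_add_Ioi hIic hf, integral_comp_neg_Ioi, neg_zero, add_comm]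

theorem integral_expSum_interpolation_mul_rpow {a l μ p q : ℝ} (ha₀ : 0 < a) (ha₂ : a < 2)
    (ha₁ : a ≠ 1) (hl : 0 < l) (hμ : 0 < μ) (hp : 0 < p) (hq : 0 < q) (hpq : p + q = 1) :
    IntegrableOn (fun x => expSum ![p, q, -1] ![l, μ, p * l + q * μ] x * x ^ (-a - 1)) (Ioi 0)
      ∧ ∫ x in Ioi 0, expSum ![p, q, -1] ![l, μ, p * l + q * μ] x * x ^ (-a - 1)
        = Gamma (-a) * (p * l ^ a + q * μ ^ a - (p * l + q * μ) ^ a) := by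
  have hθ : ∀ i, 0 < ![l, μ, p * l + q * μ] i := by
    intro i
    fin_cases i
    exacts [hl, hμ, (by positivity : 0 < p * l + q * μ)]
  have h := integral_expSum_mul_rpow_neg_sub_one (c := ![p, q, -1]) ha₀ ha₂ ha₁ hθ
    (by simp only [Fin.sum_univ_three, Matrix.cons_val_zero, Matrix.cons_val_one, Matrix.cons_val]
        linarith)
    (by simp only [Fin.sum_univ_three, Matrix.cons_val_zero, Matrix.cons_val_one, Matrix.cons_val]
        ring)
  simp only [Fin.sum_univ_three, Matrix.cons_val_zero, Matrix.cons_val_one, Matrix.cons_val] at h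
  refine ⟨h.1, h.2.trans ?_⟩
  ring

theorem ctsDensity_of_pos (a C tp tm : ℝ) {x : ℝ} (hx : 0 < x) :
    ctsDensity a C tp tm x = C * exp (-(tp * x)) * x ^ (-a - 1) := by
  simp [ctsDensity, hx]

theorem ctsDensity_neg_of_pos (a C tp tm : ℝ) {x : ℝ} (hx : 0 < x) :
    ctsDensity a C tp tm (-x) = C * exp (-(tm * x)) * x ^ (-a - 1) := by
  simp [ctsDensity, hx, not_lt_of_gt hx, abs_of_pos hx]

theorem interpolation_mul_exp_eq_expSum {p q : ℝ} (hpq : p + q = 1) (C l μ a x : ℝ) :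
    (p * exp (-((l - μ) * x)) + q - exp (-((l - μ) * x)) ^ p)
        * (C * exp (-(μ * x)) * x ^ (-a - 1))
      = C * (expSum ![p, q, -1] ![l, μ, p * l + q * μ] x * x ^ (-a - 1)) := by
  have e₁ : exp (-((l - μ) * x)) * exp (-(μ * x)) = exp (-(l * x)) := by
    rw [← exp_add]; ring_nf
  have e₂ : exp (-((l - μ) * x)) ^ p * exp (-(μ * x)) = exp (-((p * l + q * μ) * x)) := by
    rw [← exp_mul, ← exp_add]
    congr 1
    linear_combination (μ * x) * hpq
  simp only [expSum, Fin.sum_univ_three, Matrix.cons_val_zero, Matrix.cons_val_one,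
    Matrix.cons_val]
  linear_combination (C * x ^ (-a - 1) * p) * e₁ - C * x ^ (-a - 1) * e₂

theorem cts_alpha_divergence_general (a C lp lm mp mm T α p q : ℝ)
    (ha₀ : 0 < a) (ha₂ : a < 2) (ha₁ : a ≠ 1)
    (hlp : 0 < lp) (hlm : 0 < lm) (hmp : 0 < mp) (hmm : 0 < mm)
    (hα : α ∈ Ioo (-1:ℝ) 1)
    (hp : p = (1 - α) / 2) (hq : q = (1 + α) / 2)
    (r : ℝ → ℝ)
    (hrp : ∀ x : ℝ, 0 < x → r x = exp (-((lp - mp) * x)))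
    (hrm : ∀ x : ℝ, x < 0 → r x = exp (-((lm - mm) * |x|))) :
    (4 * T / (1 - α ^ 2)) *
        ∫ x : ℝ, (p * r x + q - r x ^ p) * ctsDensity a C mp mm x
      = (4 * T * C * Gamma (-a) / (1 - α ^ 2)) *
        ((p * lp ^ a + q * mp ^ a - (p * lp + q * mp) ^ a)
          + (p * lm ^ a + q * mm ^ a - (p * lm + q * mm) ^ a)) := by
  have hp₀ : 0 < p := by rw [hp]; linarith [hα.2]
  have hq₀ : 0 < q := by rw [hq]; linarith [hα.1]
  have hpq : p + q = 1 := by rw [hp, hq]; ring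
  obtain ⟨hintP, hP⟩ := integral_expSum_interpolation_mul_rpow ha₀ ha₂ ha₁ hlp hmp hp₀ hq₀ hpq
  obtain ⟨hintM, hM⟩ := integral_expSum_interpolation_mul_rpow ha₀ ha₂ ha₁ hlm hmm hp₀ hq₀ hpq
  have hfP : EqOn (fun x => (p * r x + q - r x ^ p) * ctsDensity a C mp mm x)
      (fun x => C * (expSum ![p, q, -1] ![lp, mp, p * lp + q * mp] x * x ^ (-a - 1))) (Ioi 0) :=
    fun x hx => by
      simp only [hrp x hx, ctsDensity_of_pos a C mp mm hx, interpolation_mul_exp_eq_expSum hpq]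
  have hfM : EqOn (fun x => (p * r (-x) + q - r (-x) ^ p) * ctsDensity a C mp mm (-x))
      (fun x => C * (expSum ![p, q, -1] ![lm, mm, p * lm + q * mm] x * x ^ (-a - 1))) (Ioi 0) :=
    fun x hx => by
      simp only [hrm (-x) (neg_neg_of_pos hx), abs_neg, abs_of_pos (show (0 : ℝ) < x from hx),
        ctsDensity_neg_of_pos a C mp mm hx, interpolation_mul_exp_eq_expSum hpq]
  rw [integral_eq_integral_Ioi_add_integral_Ioi_comp_neg
      (IntegrableOn.congr_fun (hintP.const_mul C) hfP.symm measurableSet_Ioi)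
      (IntegrableOn.congr_fun (hintM.const_mul C) hfM.symm measurableSet_Ioi),
    setIntegral_congr_fun measurableSet_Ioi hfP, setIntegral_congr_fun measurableSet_Ioi hfM,
    integral_const_mul, integral_const_mul, hP, hM]
  ring

/-- α-divergence (α ≠ ±1) between two equivalent-martingale CTS processes. -/
theorem cts_alpha_divergence (a C lp lm mp mm T α p q : ℝ)
    (ha₀ : 0 < a) (ha₂ : a < 2) (ha₁ : a ≠ 1)
    (hC : 0 < C) (hlp : 0 < lp) (hlm : 0 < lm) (hmp : 0 < mp) (hmm : 0 < mm)
    (hT : 0 < T) (hα : α ∈ Ioo (-1:ℝ) 1)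
    (hp : p = (1 - α) / 2) (hq : q = (1 + α) / 2)
    (r : ℝ → ℝ)
    (hrp : ∀ x : ℝ, 0 < x → r x = exp (-((lp - mp) * x)))
    (hrm : ∀ x : ℝ, x < 0 → r x = exp (-((lm - mm) * |x|))) :
    (4 * T / (1 - α ^ 2)) *
        ∫ x : ℝ, (p * r x + q - r x ^ p) * ctsDensity a C mp mm x
      = (4 * T * C * Gamma (-a) / (1 - α ^ 2)) *
        ((p * lp ^ a + q * mp ^ a - (p * lp + q * mp) ^ a)
          + (p * lm ^ a + q * mm ^ a - (p * lm + q * mm) ^ a)) :=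
  cts_alpha_divergence_general a C lp lm mp mm T α p q ha₀ ha₂ ha₁ hlp hlm hmp hmm hα hp hq r hrp
    hrm
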